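/- Identify ℝ⁴ with ℂ² via z₁ = x₀ + i·x₁, z₂ = x₂ + i·x₃, and for x ≠ 0 let γ(x) = (1/|x|)·(x₀·I₂ − i(x₁σ₁ + x₂σ₂ + x₃σ₃)) where |x| is the Euclidean norm. Define A₁(z) = z̄₁σ₁ − i·z̄₂σ₂ + z̄₂σ₃ and A₂(z) = −z̄₂σ₁ + i·z̄₁σ₂ + z̄₁σ₃. Then for every z ≠ 0 and j = 1, 2: γ(z)⁻¹·∂ⱼγ(z) = −(1/(2|z|²))·Aⱼ(z) and γ(z)⁻¹·∂̄ⱼγ(z) = (1/(2|z|²))·Aⱼ(z)*, where |z|² = |z₁|² + |z₂|². (That is, γ⁻¹dγ = −(1/(2|z|²))(η − η*) with η = A₁dz₁ + A₂dz₂.) -/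

import Mathlib

open scoped Matrix

attribute [local instance] Matrix.normedAddCommGroup Matrix.normedSpace

/-- The Pauli matrix `σ₁`. -/
noncomputable def pauli1 : Matrix (Fin 2) (Fin 2) ℂ := !![0, 1; 1, 0]

/-- The Pauli matrix `σ₂`. -/
noncomputable def pauli2 : Matrix (Fin 2) (Fin 2) ℂ := !![0, -Complex.I; Complex.I, 0]

/-- The Pauli matrix `σ₃`. -/
noncomputable def pauli3 : Matrix (Fin 2) (Fin 2) ℂ := !![1, 0; 0, -1]

/-- The Wirtinger derivative `∂₁` of a real-differentiable function on `ℂ²`. -/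
noncomputable def wderiv1 {E : Type*} [NormedAddCommGroup E] [NormedSpace ℂ E]
    (f : ℂ × ℂ → E) (z : ℂ × ℂ) : E :=
  (1 / 2 : ℂ) • (fderiv ℝ f z (1, 0) - Complex.I • fderiv ℝ f z (Complex.I, 0))

/-- The Wirtinger derivative `∂̄₁` of a real-differentiable function on `ℂ²`. -/
noncomputable def wderivbar1 {E : Type*} [NormedAddCommGroup E] [NormedSpace ℂ E]
    (f : ℂ × ℂ → E) (z : ℂ × ℂ) : E :=
  (1 / 2 : ℂ) • (fderiv ℝ f z (1, 0) + Complex.I • fderiv ℝ f z (Complex.I, 0))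

/-- The Wirtinger derivative `∂₂` of a real-differentiable function on `ℂ²`. -/
noncomputable def wderiv2 {E : Type*} [NormedAddCommGroup E] [NormedSpace ℂ E]
    (f : ℂ × ℂ → E) (z : ℂ × ℂ) : E :=
  (1 / 2 : ℂ) • (fderiv ℝ f z (0, 1) - Complex.I • fderiv ℝ f z (0, Complex.I))

/-- The Wirtinger derivative `∂̄₂` of a real-differentiable function on `ℂ²`. -/
noncomputable def wderivbar2 {E : Type*} [NormedAddCommGroup E] [NormedSpace ℂ E]
    (f : ℂ × ℂ → E) (z : ℂ × ℂ) : E :=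
  (1 / 2 : ℂ) • (fderiv ℝ f z (0, 1) + Complex.I • fderiv ℝ f z (0, Complex.I))

/-- The BPST map `γ` in the complex coordinates `z₁ = x₀ + ix₁`, `z₂ = x₂ + ix₃`. -/
noncomputable def gammaBPSTC (z : ℂ × ℂ) : Matrix (Fin 2) (Fin 2) ℂ :=
  ((Real.sqrt (Complex.normSq z.1 + Complex.normSq z.2) : ℂ))⁻¹ •
    ((z.1.re : ℂ) • (1 : Matrix (Fin 2) (Fin 2) ℂ) -
      Complex.I • ((z.1.im : ℂ) • pauli1 + (z.2.re : ℂ) • pauli2 +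
        (z.2.im : ℂ) • pauli3))

/-- `A₁(z) = z̄₁σ₁ − i·z̄₂σ₂ + z̄₂σ₃`. -/
noncomputable def Abpst1 (z : ℂ × ℂ) : Matrix (Fin 2) (Fin 2) ℂ :=
  (starRingEnd ℂ) z.1 • pauli1 - Complex.I • ((starRingEnd ℂ) z.2 • pauli2) +
    (starRingEnd ℂ) z.2 • pauli3

/-- `A₂(z) = −z̄₂σ₁ + i·z̄₁σ₂ + z̄₁σ₃`. -/
noncomputable def Abpst2 (z : ℂ × ℂ) : Matrix (Fin 2) (Fin 2) ℂ :=
  -((starRingEnd ℂ) z.2 • pauli1) + Complex.I • ((starRingEnd ℂ) z.1 • pauli2) +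
    (starRingEnd ℂ) z.1 • pauli3

/-!
Write `γ(x) = |x|⁻¹ • M(x)` with `M(x) = x₀ − i(x₁σ₁ + x₂σ₂ + x₃σ₃)` real-linear.
Since `M(x)ᴴ M(x) = |x|² • 1`, `γ` is unitary, and differentiating `|x|⁻¹` gives
`γ⁻¹ dγ(v) = |z|⁻² • (M(z)ᴴ M(v) − ⟨z, v⟩ • 1)`. The Wirtinger combinations of the
right-hand side are entrywise polynomial identities that produce `−Aⱼ(z)` and `Aⱼ(z)*`.
-/

open Complex

noncomputable def bpstNormSq (w : ℂ × ℂ) : ℝ := normSq w.1 + normSq w.2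

lemma bpstNormSq_pos {z : ℂ × ℂ} (hz : z ≠ 0) : 0 < bpstNormSq z := by
  rcases ne_or_eq z.1 0 with h | h
  · exact add_pos_of_pos_of_nonneg (normSq_pos.2 h) (normSq_nonneg _)
  · have h2 : z.2 ≠ 0 := fun h2 => hz (Prod.ext h h2)
    exact add_pos_of_nonneg_of_pos (normSq_nonneg _) (normSq_pos.2 h2)

noncomputable def bpstLinear : (ℂ × ℂ) →ₗ[ℝ] Matrix (Fin 2) (Fin 2) ℂ where
  toFun w := (w.1.re : ℂ) • (1 : Matrix (Fin 2) (Fin 2) ℂ) -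
      I • ((w.1.im : ℂ) • pauli1 + (w.2.re : ℂ) • pauli2 + (w.2.im : ℂ) • pauli3)
  map_add' v w := by simp only [Prod.fst_add, Prod.snd_add, add_re, add_im, ofReal_add]; module
  map_smul' c w := by
    simp only [Prod.smul_fst, Prod.smul_snd, smul_re, smul_im, smul_eq_mul, ofReal_mul,
      RingHom.id_apply]
    module

lemma bpstLinear_apply (w : ℂ × ℂ) : bpstLinear w =
    !![(w.1.re : ℂ) - I * w.2.im, -(I * w.1.im) - w.2.re;
       -(I * w.1.im) + w.2.re, (w.1.re : ℂ) + I * w.2.im] := by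
  ext i j
  fin_cases i <;> fin_cases j <;>
    simp [bpstLinear, pauli1, pauli2, pauli3, Complex.ext_iff]

lemma gammaBPSTC_eq_smul (w : ℂ × ℂ) :
    gammaBPSTC w = (√(bpstNormSq w))⁻¹ • bpstLinear w := by
  rw [gammaBPSTC, ← ofReal_inv, Complex.coe_smul]; rfl

lemma bpstLinear_conjTranspose_mul_self (w : ℂ × ℂ) :
    (bpstLinear w)ᴴ * bpstLinear w = (bpstNormSq w : ℂ) • 1 := by
  rw [bpstLinear_apply]
  ext i j
  fin_cases i <;> fin_cases j <;>
    simp [Matrix.mul_apply, bpstNormSq, normSq_apply, Complex.ext_iff] <;>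
    (try constructor) <;> ring

lemma gammaBPSTC_conjTranspose_mul_self {z : ℂ × ℂ} (hz : z ≠ 0) :
    (gammaBPSTC z)ᴴ * gammaBPSTC z = 1 := by
  have hs := bpstNormSq_pos hz
  rw [gammaBPSTC_eq_smul, Matrix.conjTranspose_smul, star_trivial, Matrix.smul_mul,
    Matrix.mul_smul, bpstLinear_conjTranspose_mul_self, smul_smul, ← Complex.coe_smul,
    smul_smul, ← ofReal_mul, ← mul_inv, Real.mul_self_sqrt hs.le, inv_mul_cancel₀ hs.ne',
    ofReal_one, one_smul]

lemma gammaBPSTC_inv_eq_conjTranspose {z : ℂ × ℂ} (hz : z ≠ 0) :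
    (gammaBPSTC z)⁻¹ = (gammaBPSTC z)ᴴ :=
  Matrix.inv_eq_left_inv (gammaBPSTC_conjTranspose_mul_self hz)

noncomputable def bpstInner (z : ℂ × ℂ) : (ℂ × ℂ) →L[ℝ] ℝ :=
  (innerSL ℝ z.1).comp (.fst ℝ ℂ ℂ) + (innerSL ℝ z.2).comp (.snd ℝ ℂ ℂ)

lemma bpstInner_apply (z v : ℂ × ℂ) :
    bpstInner z v = z.1.re * v.1.re + z.1.im * v.1.im + (z.2.re * v.2.re + z.2.im * v.2.im) := by
  simp [bpstInner, Complex.inner]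
  ring

lemma hasFDerivAt_bpstNormSq (z : ℂ × ℂ) : HasFDerivAt bpstNormSq (2 • bpstInner z) z := by
  have h := (hasFDerivAt_fst (p := z) (𝕜 := ℝ)).norm_sq.add hasFDerivAt_snd.norm_sq
  simp only [← normSq_eq_norm_sq, ← smul_add] at h
  exact h

lemma hasFDerivAt_inv_sqrt_bpstNormSq {z : ℂ × ℂ} (hz : z ≠ 0) :
    HasFDerivAt (fun w => (√(bpstNormSq w))⁻¹)
      (-(√(bpstNormSq z) * bpstNormSq z)⁻¹ • bpstInner z) z := by
  have hs := bpstNormSq_pos hz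
  have hρ : 0 < √(bpstNormSq z) := Real.sqrt_pos.2 hs
  refine ((hasDerivAt_inv hρ.ne').comp_hasFDerivAt z
    ((hasFDerivAt_bpstNormSq z).sqrt hs.ne')).congr_fderiv ?_
  rw [Real.sq_sqrt hs.le]
  module

lemma fderiv_gammaBPSTC_apply {z : ℂ × ℂ} (hz : z ≠ 0) (v : ℂ × ℂ) :
    fderiv ℝ gammaBPSTC z v = (√(bpstNormSq z))⁻¹ •
      (bpstLinear v - (bpstInner z v / bpstNormSq z) • bpstLinear z) := by
  have hγ : HasFDerivAt (fun w => (√(bpstNormSq w))⁻¹ • bpstLinear w) _ z :=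
    (hasFDerivAt_inv_sqrt_bpstNormSq hz).smul
      (LinearMap.toContinuousLinearMap bpstLinear).hasFDerivAt
  rw [show gammaBPSTC = _ from funext gammaBPSTC_eq_smul, hγ.fderiv]
  -- `add_apply` and `smulRight_apply` do not see through `Matrix.normedAddCommGroup`.
  change (√(bpstNormSq z))⁻¹ • bpstLinear v +
    ((-(√(bpstNormSq z) * bpstNormSq z)⁻¹) * bpstInner z v) • bpstLinear z = _
  module

lemma gammaBPSTC_inv_mul_fderiv {z : ℂ × ℂ} (hz : z ≠ 0) (v : ℂ × ℂ) :
    (gammaBPSTC z)⁻¹ * fderiv ℝ gammaBPSTC z v =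
      (bpstNormSq z)⁻¹ • ((bpstLinear z)ᴴ * bpstLinear v - bpstInner z v • 1) := by
  have hs := bpstNormSq_pos hz
  have hρ : (√(bpstNormSq z) : ℂ) ≠ 0 := ofReal_ne_zero.2 (Real.sqrt_pos.2 hs).ne'
  have hsq : (√(bpstNormSq z) : ℂ) * √(bpstNormSq z) = bpstNormSq z := by
    exact_mod_cast Real.mul_self_sqrt hs.le
  rw [gammaBPSTC_inv_eq_conjTranspose hz, gammaBPSTC_eq_smul, fderiv_gammaBPSTC_apply hz,
    Matrix.conjTranspose_smul, star_trivial, Matrix.smul_mul, Matrix.mul_smul, Matrix.mul_sub,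
    Matrix.mul_smul, bpstLinear_conjTranspose_mul_self, ← Complex.coe_smul]
  match_scalars <;> simp only [Complex.coe_algebraMap, ← hsq] <;> field_simp

lemma bpstLinear_wirtinger1_eq_neg_Abpst1 (z : ℂ × ℂ) :
    (bpstLinear z)ᴴ * bpstLinear (1, 0) - (bpstInner z (1, 0) : ℂ) • 1 -
      I • ((bpstLinear z)ᴴ * bpstLinear (I, 0) - (bpstInner z (I, 0) : ℂ) • 1) =
      -Abpst1 z := by
  simp only [bpstLinear_apply, bpstInner_apply]
  ext i j
  fin_cases i <;> fin_cases j <;>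
    simp [Matrix.mul_apply, Abpst1, pauli1, pauli2, pauli3, Complex.ext_iff] <;>
    (try constructor) <;> ring

lemma bpstLinear_wirtinger2_eq_neg_Abpst2 (z : ℂ × ℂ) :
    (bpstLinear z)ᴴ * bpstLinear (0, 1) - (bpstInner z (0, 1) : ℂ) • 1 -
      I • ((bpstLinear z)ᴴ * bpstLinear (0, I) - (bpstInner z (0, I) : ℂ) • 1) =
      -Abpst2 z := by
  simp only [bpstLinear_apply, bpstInner_apply]
  ext i j
  fin_cases i <;> fin_cases j <;>
    simp [Matrix.mul_apply, Abpst2, pauli1, pauli2, pauli3, Complex.ext_iff] <;> ring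

lemma bpstLinear_wirtingerBar1_eq_star_Abpst1 (z : ℂ × ℂ) :
    (bpstLinear z)ᴴ * bpstLinear (1, 0) - (bpstInner z (1, 0) : ℂ) • 1 +
      I • ((bpstLinear z)ᴴ * bpstLinear (I, 0) - (bpstInner z (I, 0) : ℂ) • 1) =
      star (Abpst1 z) := by
  simp only [bpstLinear_apply, bpstInner_apply, Matrix.star_eq_conjTranspose]
  ext i j
  fin_cases i <;> fin_cases j <;>
    simp [Matrix.mul_apply, Abpst1, pauli1, pauli2, pauli3, Complex.ext_iff] <;> ring

lemma bpstLinear_wirtingerBar2_eq_star_Abpst2 (z : ℂ × ℂ) :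
    (bpstLinear z)ᴴ * bpstLinear (0, 1) - (bpstInner z (0, 1) : ℂ) • 1 +
      I • ((bpstLinear z)ᴴ * bpstLinear (0, I) - (bpstInner z (0, I) : ℂ) • 1) =
      star (Abpst2 z) := by
  simp only [bpstLinear_apply, bpstInner_apply, Matrix.star_eq_conjTranspose]
  ext i j
  fin_cases i <;> fin_cases j <;>
    simp [Matrix.mul_apply, Abpst2, pauli1, pauli2, pauli3, Complex.ext_iff] <;> ring

/-- for `z ≠ 0` and `j = 1, 2`,
`γ⁻¹·∂ⱼγ = −(1/(2|z|²))·Aⱼ(z)` and `γ⁻¹·∂̄ⱼγ = (1/(2|z|²))·Aⱼ(z)*`,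
i.e. `γ⁻¹dγ = −(1/(2|z|²))(η − η*)` with `η = A₁dz₁ + A₂dz₂`. -/
theorem gammaBPSTC_maurer_cartan (z : ℂ × ℂ) (hz : z ≠ 0) :
    (gammaBPSTC z)⁻¹ * wderiv1 gammaBPSTC z =
      -((1 / (2 * ((Complex.normSq z.1 + Complex.normSq z.2 : ℝ) : ℂ))) •
        Abpst1 z) ∧
    (gammaBPSTC z)⁻¹ * wderiv2 gammaBPSTC z =
      -((1 / (2 * ((Complex.normSq z.1 + Complex.normSq z.2 : ℝ) : ℂ))) •
        Abpst2 z) ∧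
    (gammaBPSTC z)⁻¹ * wderivbar1 gammaBPSTC z =
      (1 / (2 * ((Complex.normSq z.1 + Complex.normSq z.2 : ℝ) : ℂ))) •
        star (Abpst1 z) ∧
    (gammaBPSTC z)⁻¹ * wderivbar2 gammaBPSTC z =
      (1 / (2 * ((Complex.normSq z.1 + Complex.normSq z.2 : ℝ) : ℂ))) •
        star (Abpst2 z) := by
  rw [← bpstNormSq.eq_1]
  simp only [wderiv1, wderiv2, wderivbar1, wderivbar2, Matrix.mul_smul, Matrix.mul_add,
    Matrix.mul_sub]
  -- The Wirtinger derivatives use the ℝ-structure restricted from ℂ, equal to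
  -- `Matrix.normedSpace` over ℝ only after unfolding.
  erw [gammaBPSTC_inv_mul_fderiv hz (1, 0), gammaBPSTC_inv_mul_fderiv hz (I, 0),
    gammaBPSTC_inv_mul_fderiv hz (0, 1), gammaBPSTC_inv_mul_fderiv hz (0, I)]
  refine ⟨?_, ?_, ?_, ?_⟩
  · linear_combination (norm := module)
      (1 / (2 * (bpstNormSq z : ℂ))) • bpstLinear_wirtinger1_eq_neg_Abpst1 z
  · linear_combination (norm := module)
      (1 / (2 * (bpstNormSq z : ℂ))) • bpstLinear_wirtinger2_eq_neg_Abpst2 z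
  · linear_combination (norm := module)
      (1 / (2 * (bpstNormSq z : ℂ))) • bpstLinear_wirtingerBar1_eq_star_Abpst1 z
  · linear_combination (norm := module)
      (1 / (2 * (bpstNormSq z : ℂ))) • bpstLinear_wirtingerBar2_eq_star_Abpst2 z
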